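/- arXiv:2204.12289 — 7 statements merged into one kernel-verified Lean document; each statement's English description precedes it below -/
import Mathlib

section
/- For every interior X ∈ Δ and every Y ∈ Δ, the function α ↦ RE(Y, T_α(X)) is a convex function of α on ℝ. -/
open Filter Topology Finset Matrix

noncomputable section

/-- Membership in the probability simplex Δ ⊆ ℝ^n. -/
def isSimplex {n : ℕ} (X : Fin n → ℝ) : Prop :=
  (∀ i, 0 ≤ X i) ∧ ∑ i, X i = 1

/-- Interior point of the probability simplex. -/
def isInteriorPt {n : ℕ} (X : Fin n → ℝ) : Prop :=
  (∀ i, 0 < X i) ∧ ∑ i, X i = 1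

/-- The Hedge map T_α. -/
noncomputable def hedge {n : ℕ} (C : Matrix (Fin n) (Fin n) ℝ) (a : ℝ) (X : Fin n → ℝ) :
    Fin n → ℝ :=
  fun i => X i * Real.exp (a * C.mulVec X i) / ∑ j, X j * Real.exp (a * C.mulVec X j)

/-- Hedge iterates: X^0 = X0, X^{k+1} = T_{α_k}(X^k). -/
noncomputable def hiter {n : ℕ} (C : Matrix (Fin n) (Fin n) ℝ) (a : ℕ → ℝ) (X0 : Fin n → ℝ) :
    ℕ → Fin n → ℝ
  | 0 => X0
  | k + 1 => hedge C (a k) (hiter C a X0 k)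

/-- A_K = ∑_{k=0}^K α_k. -/
noncomputable def pSum (a : ℕ → ℝ) (K : ℕ) : ℝ := ∑ k ∈ Finset.range (K + 1), a k

/-- Weighted empirical average X̄^K = (1/A_K) ∑_{k=0}^K α_k X^k. -/
noncomputable def wavg {n : ℕ} (C : Matrix (Fin n) (Fin n) ℝ) (a : ℕ → ℝ) (X0 : Fin n → ℝ)
    (K : ℕ) : Fin n → ℝ :=
  (pSum a K)⁻¹ • ∑ k ∈ Finset.range (K + 1), a k • hiter C a X0 k

/-- Relative entropy RE(Y, X) = ∑_{i : Y(i) > 0} Y(i) ln(Y(i)/X(i)). -/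
noncomputable def RE {n : ℕ} (Y X : Fin n → ℝ) : ℝ :=
  ∑ i ∈ Finset.univ.filter (fun i => 0 < Y i), Y i * Real.log (Y i / X i)

/-- (CX)_max = max_i (CX)_i. -/
noncomputable def cmax {n : ℕ} (C : Matrix (Fin n) (Fin n) ℝ) (X : Fin n → ℝ) : ℝ :=
  ⨆ i, C.mulVec X i

/-- X̄ is a limit point of the sequence of weighted empirical averages. -/
def isLimitPoint {n : ℕ} (C : Matrix (Fin n) (Fin n) ℝ) (a : ℕ → ℝ) (X0 : Fin n → ℝ)
    (Xb : Fin n → ℝ) : Prop :=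
  ∃ φ : ℕ → ℕ, StrictMono φ ∧ Tendsto (fun j => wavg C a X0 (φ j)) atTop (𝓝 Xb)
lemma logZ_convexOn {n : ℕ} (hn : n ≠ 0) (X c : Fin n → ℝ) (hX : ∀ i, 0 < X i) :
    ConvexOn ℝ Set.univ fun a : ℝ => Real.log (∑ j, X j * Real.exp (a * c j)) := by
  have : NeZero n := ⟨hn⟩
  set Z : ℝ → ℝ := fun a => ∑ j, X j * Real.exp (a * c j) with hZdef
  have hZ : ∀ a, 0 < Z a := fun a =>
    Finset.sum_pos (fun j _ => mul_pos (hX j) (Real.exp_pos _)) Finset.univ_nonempty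
  refine ⟨convex_univ, fun a _ b _ p q hp hq hpq => ?_⟩
  simp only [smul_eq_mul]
  have hZap : (0:ℝ) < Z a ^ p := Real.rpow_pos_of_pos (hZ a) p
  have hZbq : (0:ℝ) < Z b ^ q := Real.rpow_pos_of_pos (hZ b) q
  rw [← Real.log_rpow (hZ a), ← Real.log_rpow (hZ b),
    ← Real.log_mul hZap.ne' hZbq.ne']
  apply Real.log_le_log (hZ _)
  have key : ∀ j : Fin n, X j * Real.exp ((p * a + q * b) * c j)
      = (X j * Real.exp (a * c j)) ^ p * (X j * Real.exp (b * c j)) ^ q := by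
    intro j
    have h1 : (0:ℝ) < X j * Real.exp (a * c j) := mul_pos (hX j) (Real.exp_pos _)
    have h2 : (0:ℝ) < X j * Real.exp (b * c j) := mul_pos (hX j) (Real.exp_pos _)
    rw [Real.rpow_def_of_pos h1, Real.rpow_def_of_pos h2, ← Real.exp_add]
    have : Real.log (X j * Real.exp (a * c j)) * p + Real.log (X j * Real.exp (b * c j)) * q
        = Real.log (X j) + (p * a + q * b) * c j := by
      rw [Real.log_mul (hX j).ne' (Real.exp_ne_zero _),
        Real.log_mul (hX j).ne' (Real.exp_ne_zero _), Real.log_exp, Real.log_exp]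
      linear_combination Real.log (X j) * hpq
    rw [this, Real.exp_add, Real.exp_log (hX j)]
  calc Z (p * a + q * b)
      = ∑ j, (X j * Real.exp (a * c j)) ^ p * (X j * Real.exp (b * c j)) ^ q :=
        Finset.sum_congr rfl fun j _ => key j
    _ = Z a ^ p * Z b ^ q * ∑ j, (X j * Real.exp (a * c j) / Z a) ^ p
          * (X j * Real.exp (b * c j) / Z b) ^ q := by
        rw [Finset.mul_sum]
        refine Finset.sum_congr rfl fun j _ => ?_
        rw [Real.div_rpow (mul_pos (hX j) (Real.exp_pos _)).le (hZ a).le,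
          Real.div_rpow (mul_pos (hX j) (Real.exp_pos _)).le (hZ b).le]
        field_simp
        try ring
    _ ≤ Z a ^ p * Z b ^ q * ∑ j, (p * (X j * Real.exp (a * c j) / Z a)
          + q * (X j * Real.exp (b * c j) / Z b)) := by
        refine mul_le_mul_of_nonneg_left (Finset.sum_le_sum fun j _ => ?_) (mul_pos hZap hZbq).le
        exact Real.geom_mean_le_arith_mean2_weighted hp hq
          (div_nonneg (mul_pos (hX j) (Real.exp_pos _)).le (hZ a).le)
          (div_nonneg (mul_pos (hX j) (Real.exp_pos _)).le (hZ b).le) hpq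
    _ = Z a ^ p * Z b ^ q := by
        rw [Finset.sum_add_distrib, ← Finset.mul_sum, ← Finset.mul_sum,
          ← Finset.sum_div, ← Finset.sum_div]
        rw [show (∑ j, X j * Real.exp (a * c j)) = Z a from rfl,
          show (∑ j, X j * Real.exp (b * c j)) = Z b from rfl,
          div_self (hZ a).ne', div_self (hZ b).ne']
        rw [mul_one, mul_one, hpq, mul_one]

/-- the multiplicative-weights convexity lemma: α ↦ RE(Y, T_α(X))
is convex on ℝ. -/
theorem stmt7 {n : ℕ} (C : Matrix (Fin n) (Fin n) ℝ)
    (X Y : Fin n → ℝ) (hX : isInteriorPt X) (hY : isSimplex Y) :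
    ConvexOn ℝ Set.univ (fun a : ℝ => RE Y (hedge C a X)) := by
  have hn : n ≠ 0 := by
    rintro rfl
    simpa using hX.2
  have : NeZero n := ⟨hn⟩
  set c : Fin n → ℝ := C.mulVec X with hc
  set Z : ℝ → ℝ := fun a => ∑ j, X j * Real.exp (a * c j) with hZdef
  have hZ : ∀ a, 0 < Z a := fun a =>
    Finset.sum_pos (fun j _ => mul_pos (hX.1 j) (Real.exp_pos _)) Finset.univ_nonempty
  set S := Finset.univ.filter (fun i => 0 < Y i) with hS
  have key : ∀ a : ℝ, RE Y (hedge C a X)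
      = (∑ i ∈ S, Y i * (Real.log (Y i) - Real.log (X i)))
        + ((∑ i ∈ S, -(Y i * c i)) * a + (∑ i ∈ S, Y i) * Real.log (Z a)) := by
    intro a
    have h1 : ∀ i ∈ S, Y i * Real.log (Y i / hedge C a X i)
        = Y i * (Real.log (Y i) - Real.log (X i))
          + (-(Y i * c i) * a + Y i * Real.log (Z a)) := by
      intro i hi
      have hYi : 0 < Y i := (Finset.mem_filter.mp hi).2
      have hXi := hX.1 i
      have hnum : 0 < X i * Real.exp (a * c i) := mul_pos hXi (Real.exp_pos _)
      show Y i * Real.log (Y i / (X i * Real.exp (a * c i) / Z a)) = _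
      rw [Real.log_div hYi.ne' (div_pos hnum (hZ a)).ne',
        Real.log_div hnum.ne' (hZ a).ne',
        Real.log_mul hXi.ne' (Real.exp_ne_zero _), Real.log_exp]
      ring
    unfold RE
    rw [← hS, Finset.sum_congr rfl h1, Finset.sum_add_distrib, Finset.sum_add_distrib,
      ← Finset.sum_mul, ← Finset.sum_mul]
  have heq : (fun a : ℝ => RE Y (hedge C a X))
      = (fun a : ℝ => (∑ i ∈ S, Y i * (Real.log (Y i) - Real.log (X i)))
          + (∑ i ∈ S, -(Y i * c i)) * a)
        + (fun a : ℝ => (∑ i ∈ S, Y i) • Real.log (Z a)) := by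
    funext a
    simp only [Pi.add_apply, smul_eq_mul]
    rw [key a]
    ring
  rw [heq]
  have haff : ConvexOn ℝ Set.univ
      (fun a : ℝ => (∑ i ∈ S, Y i * (Real.log (Y i) - Real.log (X i)))
        + (∑ i ∈ S, -(Y i * c i)) * a) := by
    refine ⟨convex_univ, fun x _ y _ p q hp hq hpq => le_of_eq ?_⟩
    simp only [smul_eq_mul]
    linear_combination (∑ i ∈ S, Y i * (Real.log (Y i) - Real.log (X i))) * hpq.symm
  exact haff.add ((logZ_convexOn hn X c hX.1).smul
    (Finset.sum_nonneg fun i _ => hY.1 i))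
end
end

section
/- Let C be an n×n real matrix with nonnegative entries and m = max_{i,j} C_{ij} > 0. There exists a constant C̄ > 0, independent of X, Y and α, such that for all Y ∈ Δ, all interior X ∈ Δ, and all α > 0: RE(Y, T_α(X)) ≤ RE(Y, X) − α(Y − X)·CX + α(exp(mα) − 1)·C̄. -/
open Filter Topology Finset Matrix

noncomputable section

/-- upper relative-entropy bound for nonnegative C with
m = max_{ij} C_{ij} > 0. -/
theorem stmt8 {n : ℕ} (hn : 0 < n) (C : Matrix (Fin n) (Fin n) ℝ)
    (hC : ∀ i j, 0 ≤ C i j) (m : ℝ) (hm : m = ⨆ i, ⨆ j, C i j) (hmpos : 0 < m) :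
    ∃ Cbar : ℝ, 0 < Cbar ∧ ∀ (Y X : Fin n → ℝ), isSimplex Y → isInteriorPt X →
      ∀ a : ℝ, 0 < a →
        RE Y (hedge C a X) ≤ RE Y X - a * ((Y - X) ⬝ᵥ C.mulVec X)
          + a * (Real.exp (m * a) - 1) * Cbar := by
  have hne : Nonempty (Fin n) := Fin.pos_iff_nonempty.mp hn
  refine ⟨m, hmpos, ?_⟩
  intro Y X hY hX a ha
  set c : Fin n → ℝ := C.mulVec X with hc
  have hcnn : ∀ j, 0 ≤ c j := by
    intro j
    simp only [hc, Matrix.mulVec, dotProduct]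
    exact Finset.sum_nonneg fun k _ => mul_nonneg (hC j k) (hX.1 k).le
  have hCle : ∀ i j, C i j ≤ m := by
    intro i j
    rw [hm]
    exact le_trans (le_ciSup (Set.Finite.bddAbove (Set.finite_range _)) j)
      (le_ciSup (f := fun i => ⨆ j, C i j) (Set.Finite.bddAbove (Set.finite_range _)) i)
  have hcle : ∀ j, c j ≤ m := by
    intro j
    simp only [hc, Matrix.mulVec, dotProduct]
    calc ∑ k, C j k * X k ≤ ∑ k, m * X k :=
          Finset.sum_le_sum fun k _ => mul_le_mul_of_nonneg_right (hCle j k) (hX.1 k).le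
      _ = m := by rw [← Finset.mul_sum, hX.2, mul_one]
  set Z : ℝ := ∑ j, X j * Real.exp (a * c j) with hZ
  have hZpos : 0 < Z :=
    Finset.sum_pos (fun j _ => mul_pos (hX.1 j) (Real.exp_pos _)) Finset.univ_nonempty
  have hema : (0:ℝ) ≤ Real.exp (m * a) - 1 := by
    have : (1:ℝ) ≤ Real.exp (m * a) := Real.one_le_exp (by positivity)
    linarith
  -- Per-coordinate exponential bound
  have hexp : ∀ j, Real.exp (a * c j) - 1 ≤ a * c j + a * m * (Real.exp (m * a) - 1) := by
    intro j
    set x : ℝ := a * c j with hx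
    have hx0 : 0 ≤ x := mul_nonneg ha.le (hcnn j)
    have hxle : x ≤ m * a := by
      rw [hx, mul_comm]
      exact mul_le_mul_of_nonneg_right (hcle j) ha.le
    have key : Real.exp x * (1 - x) ≤ 1 := by
      have h1 : -x + 1 ≤ Real.exp (-x) := Real.add_one_le_exp (-x)
      have h2 : Real.exp x * Real.exp (-x) = 1 := by rw [← Real.exp_add]; simp
      nlinarith [Real.exp_pos x]
    have hmono : Real.exp x ≤ Real.exp (m * a) := Real.exp_le_exp.mpr hxle
    -- exp x - 1 ≤ x * exp x ≤ x * exp (m*a) = x + x*(exp(m*a)-1) ≤ x + a*m*(exp(m*a)-1)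
    have h3 : Real.exp x - 1 ≤ x * Real.exp x := by nlinarith
    have h4 : x * Real.exp x ≤ x * Real.exp (m * a) :=
      mul_le_mul_of_nonneg_left hmono hx0
    have h5 : x * (Real.exp (m * a) - 1) ≤ m * a * (Real.exp (m * a) - 1) :=
      mul_le_mul_of_nonneg_right hxle hema
    nlinarith
  have hXc : X ⬝ᵥ c = ∑ j, X j * c j := rfl
  have hZle : Z - 1 ≤ a * (X ⬝ᵥ c) + a * m * (Real.exp (m * a) - 1) := by
    have h1 : Z - 1 = ∑ j, X j * (Real.exp (a * c j) - 1) := by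
      have h0 : ∑ j, X j * (Real.exp (a * c j) - 1) = Z - ∑ j, X j := by
        rw [hZ, ← Finset.sum_sub_distrib]
        exact Finset.sum_congr rfl fun j _ => by ring
      rw [h0, hX.2]
    rw [h1, hXc]
    have h2 : ∑ j, X j * (Real.exp (a * c j) - 1)
        ≤ ∑ j, X j * (a * c j + a * m * (Real.exp (m * a) - 1)) :=
      Finset.sum_le_sum fun j _ => mul_le_mul_of_nonneg_left (hexp j) (hX.1 j).le
    calc ∑ j, X j * (Real.exp (a * c j) - 1)
        ≤ ∑ j, X j * (a * c j + a * m * (Real.exp (m * a) - 1)) := h2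
      _ = a * ∑ j, X j * c j + (∑ j, X j) * (a * m * (Real.exp (m * a) - 1)) := by
          rw [Finset.mul_sum, Finset.sum_mul, ← Finset.sum_add_distrib]
          exact Finset.sum_congr rfl fun j _ => by ring
      _ = a * (∑ j, X j * c j) + a * m * (Real.exp (m * a) - 1) := by rw [hX.2, one_mul]
  have hlogZ : Real.log Z ≤ a * (X ⬝ᵥ c) + a * m * (Real.exp (m * a) - 1) :=
    le_trans (Real.log_le_sub_one_of_pos hZpos) hZle
  -- expansion of RE
  set S := Finset.univ.filter (fun i => 0 < Y i) with hS
  have hfull : ∀ f : Fin n → ℝ, ∑ i ∈ S, Y i * f i = ∑ i, Y i * f i := by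
    intro f
    apply Finset.sum_subset (Finset.filter_subset _ _)
    intro i _ hi
    have hYi : Y i = 0 := le_antisymm
      (not_lt.mp (fun h => hi (Finset.mem_filter.mpr ⟨Finset.mem_univ i, h⟩))) (hY.1 i)
    simp [hYi]
  have hYone : ∑ i ∈ S, Y i = 1 := by
    have := hfull (fun _ => 1)
    simpa [hY.2] using this
  have hterm : ∀ i ∈ S, Y i * Real.log (Y i / hedge C a X i)
      = Y i * Real.log (Y i / X i) - a * (Y i * c i) + Y i * Real.log Z := by
    intro i hi
    have hYi : 0 < Y i := (Finset.mem_filter.mp hi).2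
    have hXi : 0 < X i := hX.1 i
    have hei : (0:ℝ) < Real.exp (a * c i) := Real.exp_pos _
    have hh : hedge C a X i = X i * Real.exp (a * c i) / Z := rfl
    rw [hh, show Y i / (X i * Real.exp (a * c i) / Z)
        = (Y i / X i) / Real.exp (a * c i) * Z by
      field_simp]
    rw [Real.log_mul (by positivity) hZpos.ne',
      Real.log_div (by positivity) hei.ne', Real.log_exp]
    ring
  have hRE : RE Y (hedge C a X) = RE Y X - a * (∑ i, Y i * c i) + Real.log Z := by
    rw [RE, ← hS, Finset.sum_congr rfl hterm]
    rw [Finset.sum_add_distrib, Finset.sum_sub_distrib, ← Finset.sum_mul, hYone, one_mul]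
    rw [← Finset.mul_sum, hfull (fun i => c i)]
    rfl
  have hdot : (Y - X) ⬝ᵥ c = (∑ i, Y i * c i) - (X ⬝ᵥ c) := by
    rw [sub_dotProduct]; rfl
  rw [hRE, hdot]
  have : a * (Real.exp (m * a) - 1) * m = a * m * (Real.exp (m * a) - 1) := by ring
  linarith [hlogZ]
end
end

section
/- Let C be an n×n real matrix with all entries in [0, 1]. Then for all Y ∈ Δ, all interior X ∈ Δ, and all α > 0: RE(Y, T_α(X)) ≤ RE(Y, X) − α(Y − X)·CX + α(exp(α) − 1). -/
open Filter Topology Finset Matrix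

noncomputable section

/-- upper relative-entropy bound for C with entries in [0, 1]. -/
theorem stmt9 {n : ℕ} (C : Matrix (Fin n) (Fin n) ℝ)
    (hC : ∀ i j, C i j ∈ Set.Icc (0 : ℝ) 1) :
    ∀ (Y X : Fin n → ℝ), isSimplex Y → isInteriorPt X → ∀ a : ℝ, 0 < a →
      RE Y (hedge C a X) ≤ RE Y X - a * ((Y - X) ⬝ᵥ C.mulVec X)
        + a * (Real.exp a - 1) := by
  intro Y X hY hX a ha
  set c := C.mulVec X with hc
  have hXpos := hX.1
  have hcj : ∀ j, c j = ∑ k, C j k * X k := fun j => rfl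
  have hc0 : ∀ j, 0 ≤ c j := by
    intro j
    rw [hcj]
    exact Finset.sum_nonneg fun k _ => mul_nonneg (hC j k).1 (hXpos k).le
  have hc1 : ∀ j, c j ≤ 1 := by
    intro j
    rw [hcj]
    calc (∑ k, C j k * X k) ≤ ∑ k, X k := by
          apply Finset.sum_le_sum
          intro k _
          nlinarith [(hC j k).1, (hC j k).2, (hXpos k).le]
      _ = 1 := hX.2
  set Z : ℝ := ∑ j, X j * Real.exp (a * c j) with hZdef
  have hnem : (Finset.univ : Finset (Fin n)).Nonempty := by
    by_contra h
    rw [Finset.not_nonempty_iff_eq_empty] at h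
    have := hX.2
    rw [h] at this
    simp at this
  have hZ : 0 < Z := by
    apply Finset.sum_pos _ hnem
    intro j _
    exact mul_pos (hXpos j) (Real.exp_pos _)
  set S := Finset.univ.filter (fun i => 0 < Y i) with hS
  have hYzero : ∀ i ∈ Finset.univ, i ∉ S → Y i = 0 := by
    intro i _ hi
    simp only [hS, Finset.mem_filter, Finset.mem_univ, true_and] at hi
    exact le_antisymm (not_lt.1 hi) (hY.1 i)
  have hsum1 : ∑ i ∈ S, Y i = 1 := by
    rw [← hY.2]
    exact Finset.sum_subset (Finset.filter_subset _ _) (fun i hi h => hYzero i hi h)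
  have hsumc : ∑ i ∈ S, Y i * c i = Y ⬝ᵥ c := by
    symm
    apply (Finset.sum_subset (Finset.filter_subset _ _) _).symm
    intro i hi h
    rw [hYzero i hi h, zero_mul]
  -- expand RE of the hedge
  have hlog : ∀ i ∈ S, Y i * Real.log (Y i / hedge C a X i) =
      Y i * Real.log (Y i / X i) + Y i * Real.log Z - Y i * (a * c i) := by
    intro i hi
    simp only [hS, Finset.mem_filter, Finset.mem_univ, true_and] at hi
    have hXi := hXpos i
    have : hedge C a X i = X i * Real.exp (a * c i) / Z := rfl
    rw [this, Real.log_div hi.ne' (by positivity),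
      Real.log_div (by positivity) hZ.ne',
      Real.log_mul hXi.ne' (Real.exp_ne_zero _), Real.log_exp,
      Real.log_div hi.ne' hXi.ne']
    ring
  have hRE : RE Y (hedge C a X) = RE Y X + Real.log Z - a * (Y ⬝ᵥ c) := by
    unfold RE
    rw [Finset.sum_congr rfl hlog, Finset.sum_sub_distrib, Finset.sum_add_distrib,
      ← Finset.sum_mul, hsum1]
    have : ∑ i ∈ S, Y i * (a * c i) = a * ∑ i ∈ S, Y i * c i := by
      rw [Finset.mul_sum]; apply Finset.sum_congr rfl; intro i _; ring
    rw [this, hsumc, ← hS]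
    ring
  -- bound log Z
  set s : ℝ := X ⬝ᵥ c with hsdef
  have hsc : s = ∑ j, X j * c j := by
    rw [hsdef]
    simp [dotProduct]
  have hs0 : 0 ≤ s := by
    rw [hsc]; exact Finset.sum_nonneg fun j _ => mul_nonneg (hXpos j).le (hc0 j)
  have hs1 : s ≤ 1 := by
    rw [hsc]
    calc (∑ j, X j * c j) ≤ ∑ j, X j := by
          apply Finset.sum_le_sum
          intro j _
          nlinarith [hc0 j, hc1 j, (hXpos j).le]
      _ = 1 := hX.2
  have hkey : ∀ t : ℝ, 0 ≤ t → t ≤ 1 → Real.exp (a * t) ≤ 1 + (Real.exp a - 1) * t := by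
    intro t ht ht1
    have hcx := convexOn_exp.2 (Set.mem_univ (0 : ℝ)) (Set.mem_univ a)
      (by linarith : (0:ℝ) ≤ 1 - t) ht (by ring)
    simp only [smul_eq_mul, mul_zero, zero_add, Real.exp_zero, mul_one] at hcx
    calc Real.exp (a * t) = Real.exp (t * a) := by rw [mul_comm]
      _ ≤ (1 - t) + t * Real.exp a := hcx
      _ = 1 + (Real.exp a - 1) * t := by ring
  have hZle : Z ≤ 1 + (Real.exp a - 1) * s := by
    calc Z ≤ ∑ j, X j * (1 + (Real.exp a - 1) * c j) := by
          apply Finset.sum_le_sum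
          intro j _
          exact mul_le_mul_of_nonneg_left (hkey (c j) (hc0 j) (hc1 j)) (hXpos j).le
      _ = (∑ j, X j) + (Real.exp a - 1) * ∑ j, X j * c j := by
          rw [Finset.mul_sum, ← Finset.sum_add_distrib]
          apply Finset.sum_congr rfl
          intro j _
          ring
      _ = 1 + (Real.exp a - 1) * s := by rw [hX.2, hsc]
  have hlogZ : Real.log Z ≤ (Real.exp a - 1) * s := by
    have := Real.log_le_sub_one_of_pos hZ
    linarith
  have hE1 : 1 + a ≤ Real.exp a := by
    have := Real.add_one_le_exp a
    linarith
  have hE2 : (1 - a) * Real.exp a ≤ 1 := by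
    have h1 : 1 - a ≤ Real.exp (-a) := by
      have := Real.add_one_le_exp (-a); linarith
    have h2 : (1 - a) * Real.exp a ≤ Real.exp (-a) * Real.exp a :=
      mul_le_mul_of_nonneg_right h1 (Real.exp_pos a).le
    rwa [← Real.exp_add, neg_add_cancel, Real.exp_zero] at h2
  have hfinal : Real.log Z ≤ a * s + a * (Real.exp a - 1) := by
    nlinarith [mul_nonneg (show (0:ℝ) ≤ Real.exp a - 1 - a by linarith)
      (show (0:ℝ) ≤ 1 - s by linarith)]
  have hdot : (Y - X) ⬝ᵥ c = Y ⬝ᵥ c - X ⬝ᵥ c := sub_dotProduct Y X c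
  rw [hRE, hdot]
  have : (X ⬝ᵥ c) = s := rfl
  linarith
end
end

section
/- For every n×n real matrix C, every Y ∈ Δ, every interior X ∈ Δ, and every α > 0: RE(Y, T_α(X)) ≥ RE(Y, X) − α(Y − X)·CX. -/
open Filter Topology Finset Matrix

noncomputable section

/-- lower relative-entropy bound. -/
theorem stmt10 {n : ℕ} (C : Matrix (Fin n) (Fin n) ℝ) :
    ∀ (Y X : Fin n → ℝ), isSimplex Y → isInteriorPt X → ∀ a : ℝ, 0 < a →
      RE Y (hedge C a X) ≥ RE Y X - a * ((Y - X) ⬝ᵥ C.mulVec X) := by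
  intro Y X hY hX a ha
  set c : Fin n → ℝ := C.mulVec X with hc
  set Z : ℝ := ∑ j, X j * Real.exp (a * c j) with hZdef
  have hn : (univ : Finset (Fin n)).Nonempty := by
    rcases Finset.eq_empty_or_nonempty (univ : Finset (Fin n)) with h|h
    · exfalso; have h2 := hY.2; rw [h] at h2; simp at h2
    · exact h
  have hZpos : 0 < Z := by
    rw [hZdef]; exact Finset.sum_pos (fun j _ => mul_pos (hX.1 j) (Real.exp_pos _)) hn
  have hjensen : Real.exp (∑ i, X i • (a * c i)) ≤ ∑ i, X i * Real.exp (a * c i) :=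
    convexOn_exp.map_sum_le (fun i _ => (hX.1 i).le) hX.2 (fun i _ => Set.mem_univ _)
  have hlog : a * ∑ i, X i * c i ≤ Real.log Z := by
    have h1 : Real.log (Real.exp (∑ i, X i • (a * c i))) ≤ Real.log Z := by
      apply Real.log_le_log (Real.exp_pos _); rw [hZdef]; exact hjensen
    rw [Real.log_exp] at h1
    calc a * ∑ i, X i * c i = ∑ i, X i • (a * c i) := by
          rw [Finset.mul_sum]; apply Finset.sum_congr rfl; intro i _
          simp [smul_eq_mul]; ring
      _ ≤ Real.log Z := h1
  have hterm : ∀ i ∈ univ.filter (fun i => 0 < Y i),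
      Y i * Real.log (Y i / hedge C a X i)
        = Y i * Real.log (Y i / X i) - a * (Y i * c i) + Y i * Real.log Z := by
    intro i hi
    have hYi : 0 < Y i := (Finset.mem_filter.mp hi).2
    have hXi := hX.1 i
    have he : hedge C a X i = X i * Real.exp (a * c i) / Z := rfl
    rw [he, div_div_eq_mul_div, Real.log_div (by positivity) (by positivity),
        Real.log_mul (ne_of_gt hYi) (ne_of_gt hZpos),
        Real.log_mul (ne_of_gt hXi) (Real.exp_ne_zero _), Real.log_exp,
        Real.log_div (ne_of_gt hYi) (ne_of_gt hXi)]
    ring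
  have hRE : RE Y (hedge C a X)
      = RE Y X - a * ∑ i ∈ univ.filter (fun i => 0 < Y i), Y i * c i
        + (∑ i ∈ univ.filter (fun i => 0 < Y i), Y i) * Real.log Z := by
    unfold RE
    rw [Finset.sum_congr rfl hterm, Finset.sum_add_distrib, Finset.sum_sub_distrib,
        ← Finset.mul_sum, ← Finset.sum_mul]
  have hs1 : ∑ i ∈ univ.filter (fun i => 0 < Y i), Y i = 1 := by
    rw [Finset.sum_filter_of_ne (fun x _ hx => lt_of_le_of_ne (hY.1 x) (Ne.symm hx))]
    exact hY.2
  have hs2 : ∑ i ∈ univ.filter (fun i => 0 < Y i), Y i * c i = ∑ i, Y i * c i := by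
    apply Finset.sum_filter_of_ne
    intro x _ hx
    rcases (hY.1 x).eq_or_lt with h|h
    · exact absurd (by rw [← h, zero_mul]) hx
    · exact h
  have hdot : (Y - X) ⬝ᵥ c = (∑ i, Y i * c i) - ∑ i, X i * c i := by
    simp [dotProduct, sub_mul, Finset.sum_sub_distrib]
  rw [ge_iff_le, hRE, hs1, hs2, hdot, mul_sub, one_mul]
  linarith [hlog]
end
end

section
/- Let C be an n×n real matrix, let X^0 ∈ Δ be interior, and let α_k > 0 for all k. Then for every coordinate i and every K ≥ 0: (1/A_K)·(ln(X^{K+1}(i)) − ln(X^0(i))) ≤ (CX̄^K)_i − (1/A_K) ∑_{k=0}^K α_k X^k·CX^k. -/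
open Filter Topology Finset Matrix

noncomputable section

lemma hedge_interior {n : ℕ} (C : Matrix (Fin n) (Fin n) ℝ) (α : ℝ) {X : Fin n → ℝ}
    (hX : isInteriorPt X) : isInteriorPt (hedge C α X) := by
  have hne : Nonempty (Fin n) := by
    rcases isEmpty_or_nonempty (Fin n) with h | h
    · exfalso; have := hX.2; simp at this
    · exact h
  have hZ : 0 < ∑ j, X j * Real.exp (α * C.mulVec X j) :=
    Finset.sum_pos (fun j _ => mul_pos (hX.1 j) (Real.exp_pos _)) Finset.univ_nonempty
  constructor
  · intro i
    exact div_pos (mul_pos (hX.1 i) (Real.exp_pos _)) hZ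
  · simp only [hedge]
    rw [← Finset.sum_div, div_self hZ.ne']

lemma hiter_interior {n : ℕ} (C : Matrix (Fin n) (Fin n) ℝ) (a : ℕ → ℝ) {X0 : Fin n → ℝ}
    (hX0 : isInteriorPt X0) : ∀ k, isInteriorPt (hiter C a X0 k)
  | 0 => hX0
  | k + 1 => hedge_interior C (a k) (hiter_interior C a hX0 k)

lemma log_hedge_le {n : ℕ} (C : Matrix (Fin n) (Fin n) ℝ) {α : ℝ} (hα : 0 < α)
    {X : Fin n → ℝ} (hX : isInteriorPt X) (i : Fin n) :
    Real.log (hedge C α X i) - Real.log (X i) ≤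
      α * (C.mulVec X i - X ⬝ᵥ C.mulVec X) := by
  set Z := ∑ j, X j * Real.exp (α * C.mulVec X j) with hZdef
  have hne : Nonempty (Fin n) := by
    rcases isEmpty_or_nonempty (Fin n) with h | h
    · exfalso; have := hX.2; simp at this
    · exact h
  have hZ : 0 < Z :=
    Finset.sum_pos (fun j _ => mul_pos (hX.1 j) (Real.exp_pos _)) Finset.univ_nonempty
  have hlog : Real.log (hedge C α X i) =
      Real.log (X i) + α * C.mulVec X i - Real.log Z := by
    rw [hedge, Real.log_div (mul_pos (hX.1 i) (Real.exp_pos _)).ne',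
      Real.log_mul (hX.1 i).ne' (Real.exp_pos _).ne', Real.log_exp]
    exact hZ.ne'
  have hjensen : Real.exp (∑ j, X j • (α * C.mulVec X j)) ≤
      ∑ j, X j • Real.exp (α * C.mulVec X j) :=
    convexOn_exp.map_sum_le (fun j _ => (hX.1 j).le) hX.2 (fun j _ => Set.mem_univ _)
  have hZge : α * (X ⬝ᵥ C.mulVec X) ≤ Real.log Z := by
    rw [Real.le_log_iff_exp_le hZ]
    have : α * (X ⬝ᵥ C.mulVec X) = ∑ j, X j • (α * C.mulVec X j) := by
      simp only [smul_eq_mul, dotProduct, Finset.mul_sum]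
      exact Finset.sum_congr rfl fun x _ => by ring
    rw [this]
    simpa [smul_eq_mul] using hjensen
  rw [hlog]
  nlinarith [hZge]

/-- logarithmic bound on the iterates in terms of the weighted
empirical average. -/
theorem stmt11 {n : ℕ} (C : Matrix (Fin n) (Fin n) ℝ)
    (a : ℕ → ℝ) (hapos : ∀ k, 0 < a k)
    (X0 : Fin n → ℝ) (hX0 : isInteriorPt X0) (i : Fin n) (K : ℕ) :
    (pSum a K)⁻¹ * (Real.log (hiter C a X0 (K + 1) i) - Real.log (X0 i)) ≤
      C.mulVec (wavg C a X0 K) i -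
        (pSum a K)⁻¹ * ∑ k ∈ Finset.range (K + 1),
          a k * (hiter C a X0 k ⬝ᵥ C.mulVec (hiter C a X0 k)) := by
  have hA : 0 < pSum a K :=
    Finset.sum_pos (fun k _ => hapos k) (Finset.nonempty_range_add_one)
  have hAinv : 0 ≤ (pSum a K)⁻¹ := inv_nonneg.mpr hA.le
  -- telescoping bound
  have htel : Real.log (hiter C a X0 (K + 1) i) - Real.log (X0 i) =
      ∑ k ∈ Finset.range (K + 1),
        (Real.log (hiter C a X0 (k + 1) i) - Real.log (hiter C a X0 k i)) := by
    rw [Finset.sum_range_sub (fun k => Real.log (hiter C a X0 k i))]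
    rfl
  have hbound : Real.log (hiter C a X0 (K + 1) i) - Real.log (X0 i) ≤
      ∑ k ∈ Finset.range (K + 1),
        a k * (C.mulVec (hiter C a X0 k) i -
          hiter C a X0 k ⬝ᵥ C.mulVec (hiter C a X0 k)) := by
    rw [htel]
    refine Finset.sum_le_sum fun k _ => ?_
    exact log_hedge_le C (hapos k) (hiter_interior C a hX0 k) i
  -- rewrite C (wavg) i
  have hwv : C.mulVec (wavg C a X0 K) i =
      (pSum a K)⁻¹ * ∑ k ∈ Finset.range (K + 1), a k * C.mulVec (hiter C a X0 k) i := by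
    simp only [wavg, Matrix.mulVec, dotProduct, Pi.smul_apply, Finset.sum_apply,
      smul_eq_mul, Finset.mul_sum]
    rw [Finset.sum_comm]
    exact Finset.sum_congr rfl fun k _ => Finset.sum_congr rfl fun j _ => by ring
  rw [hwv, ← mul_sub, ← Finset.sum_sub_distrib]
  have : ∑ k ∈ Finset.range (K + 1),
      (a k * C.mulVec (hiter C a X0 k) i -
        a k * (hiter C a X0 k ⬝ᵥ C.mulVec (hiter C a X0 k))) =
      ∑ k ∈ Finset.range (K + 1),
        a k * (C.mulVec (hiter C a X0 k) i -
          hiter C a X0 k ⬝ᵥ C.mulVec (hiter C a X0 k)) :=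
    Finset.sum_congr rfl fun k _ => by ring
  rw [this]
  exact mul_le_mul_of_nonneg_left hbound hAinv
end
end

section
/- Under the diminishing learning-rate assumptions, for every Y ∈ Δ: limsup_{K→∞} (1/A_K) ∑_{k=0}^K α_k (Y − X^k)·CX^k ≤ 0. -/
open Filter Topology Finset Matrix

noncomputable section

/-!
Relative entropy `RE Y ·` is a Lyapunov function for Hedge. With `Z` the normaliser of `T_α X`,
`RE Y X - RE Y (T_α X) = α Y·CX - log Z`, and `e^y ≤ 1 + y + y² e^y` for `y ≥ 0` gives
`log Z ≤ α X·CX + (αB)² e^{αB}` when the payoffs `CX` lie in `[0, B]`. Summing, the weighted regret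
`∑ α_k (Y - X^k)·CX^k` telescopes to at most `RE Y X^0` plus an error series dominated by
`∑ α_k (e^{α_k} - 1) < ∞`; dividing by `A_K → ∞` gives the claim.
-/

theorem Real.exp_sub_one_sub_le_sq_mul_exp {x : ℝ} (hx : 0 ≤ x) :
    Real.exp x - 1 - x ≤ x ^ 2 * Real.exp x := by
  have h : 1 - x ≤ Real.exp (-x) := Real.one_sub_le_exp_neg x
  have hexp : Real.exp (-x) * Real.exp x = 1 := by rw [← Real.exp_add]; simp
  have hmul : Real.exp x - 1 ≤ x * Real.exp x := by
    nlinarith [mul_le_mul_of_nonneg_right h (Real.exp_pos x).le]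
  nlinarith [mul_le_mul_of_nonneg_left hmul hx]

theorem summable_sq_mul_exp_of_bddAbove {ι : Type*} {a : ι → ℝ} (ha : ∀ k, 0 ≤ a k)
    (hbdd : BddAbove (Set.range a)) (hsum : Summable fun k => a k * (Real.exp (a k) - 1))
    {B : ℝ} (hB : 0 ≤ B) : Summable fun k => (a k * B) ^ 2 * Real.exp (a k * B) := by
  obtain ⟨M, hM⟩ := hbdd
  refine Summable.of_nonneg_of_le (fun k => by positivity) (fun k => ?_)
    (hsum.mul_left (B ^ 2 * Real.exp (M * B)))
  have hsq : a k ^ 2 ≤ a k * (Real.exp (a k) - 1) := by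
    rw [sq]
    exact mul_le_mul_of_nonneg_left (by linarith [Real.add_one_le_exp (a k)]) (ha k)
  have hexp : Real.exp (a k * B) ≤ Real.exp (M * B) := by
    gcongr
    exact hM ⟨k, rfl⟩
  calc (a k * B) ^ 2 * Real.exp (a k * B) = B ^ 2 * (a k ^ 2 * Real.exp (a k * B)) := by ring
    _ ≤ B ^ 2 * (a k * (Real.exp (a k) - 1) * Real.exp (M * B)) := by
        have := (sq_nonneg (a k)).trans hsq
        gcongr
    _ = B ^ 2 * Real.exp (M * B) * (a k * (Real.exp (a k) - 1)) := by ring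

theorem limsup_inv_mul_nonpos {ι : Type*} {l : Filter ι} [l.NeBot] {A S : ι → ℝ} {R : ℝ}
    (hA : Tendsto A l atTop) (hS : ∀ᶠ i in l, S i ≤ R)
    (hbdd : IsBoundedUnder (· ≥ ·) l fun i => (A i)⁻¹ * S i) :
    limsup (fun i => (A i)⁻¹ * S i) l ≤ 0 := by
  have hlim : Tendsto (fun i => (A i)⁻¹ * R) l (𝓝 0) := by
    simpa using hA.inv_tendsto_atTop.mul_const R
  have hle : ∀ᶠ i in l, (A i)⁻¹ * S i ≤ (A i)⁻¹ * R :=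
    (hS.and (hA.eventually_gt_atTop 0)).mono fun i ⟨hSi, hAi⟩ =>
      mul_le_mul_of_nonneg_left hSi (inv_nonneg.2 hAi.le)
  calc limsup (fun i => (A i)⁻¹ * S i) l ≤ limsup (fun i => (A i)⁻¹ * R) l :=
        limsup_le_limsup hle hbdd.isCoboundedUnder_le hlim.isBoundedUnder_le
    _ = 0 := hlim.limsup_eq

theorem le_inv_sum_mul_sum {ι : Type*} {s : Finset ι} {w f : ι → ℝ} {m : ℝ}
    (hw : ∀ k ∈ s, 0 ≤ w k) (hs : 0 < ∑ k ∈ s, w k) (hf : ∀ k ∈ s, m ≤ f k) :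
    m ≤ (∑ k ∈ s, w k)⁻¹ * ∑ k ∈ s, w k * f k := by
  rw [inv_mul_eq_div, le_div_iff₀ hs, mul_sum]
  exact sum_le_sum fun k hk => by
    rw [mul_comm]
    exact mul_le_mul_of_nonneg_left (hf k hk) (hw k hk)

section Simplex

variable {n : ℕ}

theorem isInteriorPt.isSimplex {X : Fin n → ℝ} (hX : isInteriorPt X) : isSimplex X :=
  ⟨fun i => (hX.1 i).le, hX.2⟩

theorem isSimplex.dotProduct_le {X c : Fin n → ℝ} {B : ℝ} (hX : isSimplex X)
    (hc : ∀ i, c i ≤ B) : X ⬝ᵥ c ≤ B :=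
  calc X ⬝ᵥ c ≤ ∑ i, X i * B :=
        sum_le_sum fun i _ => mul_le_mul_of_nonneg_left (hc i) (hX.1 i)
    _ = B := by rw [← sum_mul, hX.2, one_mul]

theorem isSimplex.mulVec_nonneg {C : Matrix (Fin n) (Fin n) ℝ} {X : Fin n → ℝ}
    (hX : isSimplex X) (hC : ∀ i j, 0 ≤ C i j) (i : Fin n) : 0 ≤ (C *ᵥ X) i :=
  dotProduct_nonneg_of_nonneg (hC i) hX.1

theorem isSimplex.mulVec_le {C : Matrix (Fin n) (Fin n) ℝ} {X : Fin n → ℝ} {B : ℝ}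
    (hX : isSimplex X) (hCB : ∀ i j, C i j ≤ B) (i : Fin n) : (C *ᵥ X) i ≤ B := by
  rw [mulVec, dotProduct_comm]
  exact hX.dotProduct_le (hCB i)

theorem isSimplex.neg_le_dotProduct_sub {X Y c : Fin n → ℝ} {B : ℝ} (hX : isSimplex X)
    (hY : isSimplex Y) (hc0 : ∀ i, 0 ≤ c i) (hcB : ∀ i, c i ≤ B) : -B ≤ (Y - X) ⬝ᵥ c := by
  have hYc : 0 ≤ Y ⬝ᵥ c := dotProduct_nonneg_of_nonneg hY.1 hc0
  rw [sub_dotProduct]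
  linarith [hX.dotProduct_le hcB]

theorem sum_filter_pos_mul {ι : Type*} [Fintype ι] {Y : ι → ℝ} (hY : ∀ i, 0 ≤ Y i) (f : ι → ℝ) :
    ∑ i ∈ univ.filter (fun i => 0 < Y i), Y i * f i = ∑ i, Y i * f i :=
  sum_filter_of_ne fun i _ h => (hY i).lt_of_ne' (left_ne_zero_of_mul h)

theorem RE_nonneg {X Y : Fin n → ℝ} (hY : isSimplex Y) (hX : isInteriorPt X) : 0 ≤ RE Y X := by
  set s := univ.filter (fun i => 0 < Y i)
  have hYs : ∑ i ∈ s, Y i = 1 :=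
    (show ∑ i ∈ s, Y i = ∑ i, Y i by simpa using sum_filter_pos_mul hY.1 fun _ => 1).trans hY.2
  have hXs : ∑ i ∈ s, X i ≤ 1 :=
    hX.2 ▸ sum_le_sum_of_subset_of_nonneg (filter_subset _ _) fun i _ _ => (hX.1 i).le
  have hterm : ∀ i ∈ s, Y i - X i ≤ Y i * Real.log (Y i / X i) := fun i hi => by
    have hYi : 0 < Y i := (mem_filter.1 hi).2
    have h := Real.one_sub_inv_le_log_of_pos (div_pos hYi (hX.1 i))
    rw [inv_div] at h
    have h' := mul_le_mul_of_nonneg_left h hYi.le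
    rwa [mul_sub, mul_one, mul_div_cancel₀ _ hYi.ne'] at h'
  calc 0 ≤ ∑ i ∈ s, (Y i - X i) := by rw [sum_sub_distrib]; linarith
    _ ≤ RE Y X := sum_le_sum hterm

end Simplex

section Hedge

variable {n : ℕ} (C : Matrix (Fin n) (Fin n) ℝ) (α : ℝ)

def hedgeNormalizer (X : Fin n → ℝ) : ℝ :=
  ∑ j, X j * Real.exp (α * (C *ᵥ X) j)

theorem hedge_apply (X : Fin n → ℝ) (i : Fin n) :
    hedge C α X i = X i * Real.exp (α * (C *ᵥ X) i) / hedgeNormalizer C α X :=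
  rfl

theorem hedgeNormalizer_pos {X : Fin n → ℝ} (hX : isInteriorPt X) :
    0 < hedgeNormalizer C α X :=
  sum_pos (fun j _ => mul_pos (hX.1 j) (Real.exp_pos _))
    (nonempty_of_sum_ne_zero (hX.2.symm ▸ one_ne_zero))

theorem isInteriorPt.hedge {X : Fin n → ℝ} (hX : isInteriorPt X) :
    isInteriorPt (hedge C α X) := by
  have hZ := hedgeNormalizer_pos C α hX
  refine ⟨fun i => div_pos (mul_pos (hX.1 i) (Real.exp_pos _)) hZ, ?_⟩
  simp_rw [hedge_apply, ← sum_div]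
  exact div_self hZ.ne'

theorem isInteriorPt.hiter (a : ℕ → ℝ) {X0 : Fin n → ℝ} (hX0 : isInteriorPt X0) :
    ∀ k, isInteriorPt (hiter C a X0 k)
  | 0 => hX0
  | k + 1 => (isInteriorPt.hiter a hX0 k).hedge C (a k)

theorem RE_sub_RE_hedge {X Y : Fin n → ℝ} (hY : isSimplex Y) (hX : isInteriorPt X) :
    RE Y X - RE Y (hedge C α X) =
      α * (Y ⬝ᵥ C *ᵥ X) - Real.log (hedgeNormalizer C α X) := by
  have hZ := hedgeNormalizer_pos C α hX
  have hterm : ∀ i ∈ univ.filter (fun i => 0 < Y i),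
      Y i * Real.log (Y i / X i) - Y i * Real.log (Y i / hedge C α X i) =
        Y i * (α * (C *ᵥ X) i - Real.log (hedgeNormalizer C α X)) := fun i hi => by
    have hYi : 0 < Y i := (mem_filter.1 hi).2
    rw [Real.log_div hYi.ne' (hX.1 i).ne', Real.log_div hYi.ne' ((hX.hedge C α).1 i).ne',
      hedge_apply, Real.log_div (by positivity [hX.1 i]) hZ.ne',
      Real.log_mul (hX.1 i).ne' (Real.exp_pos _).ne', Real.log_exp]
    ring
  rw [RE, RE, ← sum_sub_distrib, sum_congr rfl hterm, sum_filter_pos_mul hY.1]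
  simp only [mul_sub, sum_sub_distrib, ← sum_mul, hY.2, one_mul, dotProduct, mul_sum]
  congr 1
  exact sum_congr rfl fun i _ => by ring

theorem log_hedgeNormalizer_le {X : Fin n → ℝ} {B : ℝ} (hα : 0 ≤ α) (hX : isInteriorPt X)
    (hc0 : ∀ i, 0 ≤ (C *ᵥ X) i) (hcB : ∀ i, (C *ᵥ X) i ≤ B) :
    Real.log (hedgeNormalizer C α X) ≤
      α * (X ⬝ᵥ C *ᵥ X) + (α * B) ^ 2 * Real.exp (α * B) := by
  have hexp : ∀ j, Real.exp (α * (C *ᵥ X) j) ≤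
      1 + α * (C *ᵥ X) j + (α * B) ^ 2 * Real.exp (α * B) := fun j => by
    have hy : 0 ≤ α * (C *ᵥ X) j := mul_nonneg hα (hc0 j)
    have hyB : α * (C *ᵥ X) j ≤ α * B := mul_le_mul_of_nonneg_left (hcB j) hα
    have : (α * (C *ᵥ X) j) ^ 2 * Real.exp (α * (C *ᵥ X) j) ≤
        (α * B) ^ 2 * Real.exp (α * B) := by gcongr
    linarith [Real.exp_sub_one_sub_le_sq_mul_exp hy]
  have hZ : hedgeNormalizer C α X ≤ 1 + α * (X ⬝ᵥ C *ᵥ X) + (α * B) ^ 2 * Real.exp (α * B) :=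
    calc hedgeNormalizer C α X
        ≤ ∑ j, X j * (1 + α * (C *ᵥ X) j + (α * B) ^ 2 * Real.exp (α * B)) :=
          sum_le_sum fun j _ => mul_le_mul_of_nonneg_left (hexp j) (hX.1 j).le
      _ = 1 + α * (X ⬝ᵥ C *ᵥ X) + (α * B) ^ 2 * Real.exp (α * B) := by
          simp only [mul_add, mul_one, sum_add_distrib, ← sum_mul, hX.2, one_mul, dotProduct,
            mul_sum]
          congr 2
          exact sum_congr rfl fun j _ => by ring
  linarith [Real.log_le_sub_one_of_pos (hedgeNormalizer_pos C α hX)]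

theorem regret_step_le {X Y : Fin n → ℝ} {B : ℝ} (hα : 0 ≤ α) (hX : isInteriorPt X)
    (hY : isSimplex Y) (hc0 : ∀ i, 0 ≤ (C *ᵥ X) i) (hcB : ∀ i, (C *ᵥ X) i ≤ B) :
    α * ((Y - X) ⬝ᵥ C *ᵥ X) ≤
      RE Y X - RE Y (hedge C α X) + (α * B) ^ 2 * Real.exp (α * B) := by
  rw [RE_sub_RE_hedge C α hY hX, sub_dotProduct]
  linarith [log_hedgeNormalizer_le C α hα hX hc0 hcB]

end Hedge

theorem sum_regret_le {n : ℕ} {C : Matrix (Fin n) (Fin n) ℝ} {a : ℕ → ℝ} {X0 Y : Fin n → ℝ}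
    {B : ℝ} (hC : ∀ i j, 0 ≤ C i j) (hCB : ∀ i j, C i j ≤ B) (ha : ∀ k, 0 ≤ a k)
    (hX0 : isInteriorPt X0) (hY : isSimplex Y) (K : ℕ) :
    ∑ k ∈ range K, a k * ((Y - hiter C a X0 k) ⬝ᵥ C *ᵥ hiter C a X0 k) ≤
      RE Y X0 + ∑ k ∈ range K, (a k * B) ^ 2 * Real.exp (a k * B) := by
  have hstep : ∀ k, a k * ((Y - hiter C a X0 k) ⬝ᵥ C *ᵥ hiter C a X0 k) ≤
      RE Y (hiter C a X0 k) - RE Y (hiter C a X0 (k + 1)) + (a k * B) ^ 2 * Real.exp (a k * B) :=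
    fun k =>
      have hX := (hX0.hiter C a k).isSimplex
      regret_step_le C (a k) (ha k) (hX0.hiter C a k) hY (hX.mulVec_nonneg hC) (hX.mulVec_le hCB)
  calc _ ≤ ∑ k ∈ range K, (RE Y (hiter C a X0 k) - RE Y (hiter C a X0 (k + 1)) +
          (a k * B) ^ 2 * Real.exp (a k * B)) := sum_le_sum fun k _ => hstep k
    _ = RE Y X0 - RE Y (hiter C a X0 K) + ∑ k ∈ range K, (a k * B) ^ 2 * Real.exp (a k * B) := by
        rw [sum_add_distrib, sum_range_sub']
        rfl
    _ ≤ _ := by linarith [RE_nonneg hY (hX0.hiter C a K)]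

theorem stmt13_general {n : ℕ} (C : Matrix (Fin n) (Fin n) ℝ)
    (hC : ∀ i j, 0 ≤ C i j)
    (a : ℕ → ℝ) (hapos : ∀ k, 0 < a k)
    (ha0 : Tendsto a atTop (𝓝 0))
    (hadiv : Tendsto (pSum a) atTop atTop)
    (hasum : Summable fun k => a k * (Real.exp (a k) - 1))
    (X0 : Fin n → ℝ) (hX0 : isInteriorPt X0)
    (Y : Fin n → ℝ) (hY : isSimplex Y) :
    Filter.limsup (fun K => (pSum a K)⁻¹ *
        ∑ k ∈ Finset.range (K + 1),
          a k * ((Y - hiter C a X0 k) ⬝ᵥ C.mulVec (hiter C a X0 k))) atTop ≤ 0 := by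
  set B := ∑ i, ∑ j, C i j
  have hB : 0 ≤ B := sum_nonneg fun i _ => sum_nonneg fun j _ => hC i j
  have hCB : ∀ i j, C i j ≤ B := fun i j =>
    (single_le_sum (fun j _ => hC i j) (mem_univ j)).trans
      (single_le_sum (fun i _ => sum_nonneg fun j _ => hC i j) (mem_univ i))
  have ha : ∀ k, 0 ≤ a k := fun k => (hapos k).le
  have herr := summable_sq_mul_exp_of_bddAbove ha ha0.bddAbove_range hasum hB
  refine limsup_inv_mul_nonpos hadiv
    (R := RE Y X0 + ∑' k, (a k * B) ^ 2 * Real.exp (a k * B)) (Eventually.of_forall fun K => ?_)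
    (isBoundedUnder_of ⟨-B, fun K => ?_⟩)
  · exact (sum_regret_le hC hCB ha hX0 hY (K + 1)).trans
      (add_le_add_right (herr.sum_le_tsum _ fun k _ => by positivity) _)
  · have hX k := (hX0.hiter C a k).isSimplex
    exact le_inv_sum_mul_sum (fun k _ => ha k) (sum_pos (fun k _ => hapos k) nonempty_range_add_one)
      fun k _ => (hX k).neg_le_dotProduct_sub hY ((hX k).mulVec_nonneg hC) ((hX k).mulVec_le hCB)

/-- limsup_{K→∞} (1/A_K) ∑_{k=0}^K α_k (Y − X^k)·CX^k ≤ 0. -/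
theorem stmt13 {n : ℕ} (hn : 0 < n) (C : Matrix (Fin n) (Fin n) ℝ)
    (hC : ∀ i j, 0 ≤ C i j)
    (a : ℕ → ℝ) (hapos : ∀ k, 0 < a k)
    (ha0 : Tendsto a atTop (𝓝 0))
    (hadiv : Tendsto (pSum a) atTop atTop)
    (hasum : Summable fun k => a k * (Real.exp (a k) - 1))
    (X0 : Fin n → ℝ) (hX0 : isInteriorPt X0)
    (Y : Fin n → ℝ) (hY : isSimplex Y) :
    Filter.limsup (fun K => (pSum a K)⁻¹ *
        ∑ k ∈ Finset.range (K + 1),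
          a k * ((Y - hiter C a X0 k) ⬝ᵥ C.mulVec (hiter C a X0 k))) atTop ≤ 0 :=
  stmt13_general C hC a hapos ha0 hadiv hasum X0 hX0 Y hY
end
end

section
/- Under the diminishing learning-rate assumptions, if for some coordinate i one has liminf_{K→∞} (1/A_K) ∑_{k=0}^K α_k (E_i − X^k)·CX^k < 0, where E_i is the i-th standard basis vector, then liminf_{K→∞} X^K(i) = 0. -/
open Filter Topology Finset Matrix

noncomputable section

section AuxStmt14

variable {n : ℕ}

lemma univ_nonempty_of_interior {X : Fin n → ℝ} (hX : isInteriorPt X) :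
    (Finset.univ : Finset (Fin n)).Nonempty := by
  rcases (Finset.univ : Finset (Fin n)).eq_empty_or_nonempty with h | h
  · exfalso
    have := hX.2
    rw [h, Finset.sum_empty] at this
    norm_num at this
  · exact h

lemma interior_hedge (C : Matrix (Fin n) (Fin n) ℝ) (α : ℝ) {X : Fin n → ℝ}
    (hX : isInteriorPt X) : isInteriorPt (hedge C α X) := by
  have hZ : 0 < ∑ j, X j * Real.exp (α * C.mulVec X j) :=
    Finset.sum_pos (fun j _ => mul_pos (hX.1 j) (Real.exp_pos _))
      (univ_nonempty_of_interior hX)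
  refine ⟨fun j => div_pos (mul_pos (hX.1 j) (Real.exp_pos _)) hZ, ?_⟩
  simp only [hedge]
  rw [← Finset.sum_div, div_self hZ.ne']

lemma interior_hiter (C : Matrix (Fin n) (Fin n) ℝ) (a : ℕ → ℝ) {X0 : Fin n → ℝ}
    (hX0 : isInteriorPt X0) : ∀ K, isInteriorPt (hiter C a X0 K)
  | 0 => hX0
  | K + 1 => interior_hedge C (a K) (interior_hiter C a hX0 K)

lemma jensen_exp {X : Fin n → ℝ} (hX : isInteriorPt X) (t : Fin n → ℝ) :
    Real.exp (∑ j, X j * t j) ≤ ∑ j, X j * Real.exp (t j) := by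
  have := convexOn_exp.map_sum_le (t := Finset.univ) (w := X) (p := t)
    (fun j _ => (hX.1 j).le) hX.2 (fun j _ => Set.mem_univ _)
  simpa [smul_eq_mul] using this

lemma hedge_step (C : Matrix (Fin n) (Fin n) ℝ) (α : ℝ) {X : Fin n → ℝ}
    (hX : isInteriorPt X) (i : Fin n) :
    hedge C α X i ≤ X i * Real.exp (α * (C.mulVec X i - X ⬝ᵥ C.mulVec X)) := by
  have hJ : Real.exp (α * (X ⬝ᵥ C.mulVec X)) ≤ ∑ j, X j * Real.exp (α * C.mulVec X j) := by
    have h1 := jensen_exp hX (fun j => α * C.mulVec X j)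
    have h2 : (∑ j, X j * (α * C.mulVec X j)) = α * (X ⬝ᵥ C.mulVec X) := by
      simp only [dotProduct, Finset.mul_sum]
      exact Finset.sum_congr rfl fun j _ => by ring
    rwa [h2] at h1
  have hE : (0:ℝ) < Real.exp (α * (X ⬝ᵥ C.mulVec X)) := Real.exp_pos _
  have step1 : hedge C α X i ≤
      X i * Real.exp (α * C.mulVec X i) / Real.exp (α * (X ⬝ᵥ C.mulVec X)) := by
    unfold hedge
    gcongr
    exact mul_nonneg (hX.1 i).le (Real.exp_pos _).le
  calc hedge C α X i ≤ X i * Real.exp (α * C.mulVec X i) / Real.exp (α * (X ⬝ᵥ C.mulVec X)) :=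
        step1
    _ = X i * Real.exp (α * (C.mulVec X i - X ⬝ᵥ C.mulVec X)) := by
        rw [mul_div_assoc, ← Real.exp_sub, ← mul_sub]

lemma hiter_le (C : Matrix (Fin n) (Fin n) ℝ) (a : ℕ → ℝ) {X0 : Fin n → ℝ}
    (hX0 : isInteriorPt X0) (i : Fin n) : ∀ K : ℕ,
    hiter C a X0 (K + 1) i ≤ X0 i * Real.exp (∑ k ∈ Finset.range (K + 1),
      a k * (((Pi.single i 1 : Fin n → ℝ) - hiter C a X0 k) ⬝ᵥ
        C.mulVec (hiter C a X0 k))) := by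
  have hterm : ∀ k : ℕ,
      ((Pi.single i 1 : Fin n → ℝ) - hiter C a X0 k) ⬝ᵥ C.mulVec (hiter C a X0 k)
      = C.mulVec (hiter C a X0 k) i - hiter C a X0 k ⬝ᵥ C.mulVec (hiter C a X0 k) := by
    intro k
    rw [sub_dotProduct, single_dotProduct, one_mul]
  intro K
  induction K with
  | zero =>
      have := hedge_step C (a 0) hX0 i
      simpa [hiter, Finset.sum_range_one, hterm 0] using this
  | succ K ih =>
      have hint := interior_hiter C a hX0 (K + 1)
      have hstep := hedge_step C (a (K + 1)) hint i
      have h1 : hiter C a X0 (K + 2) i ≤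
          hiter C a X0 (K + 1) i *
            Real.exp (a (K + 1) * (((Pi.single i 1 : Fin n → ℝ) - hiter C a X0 (K + 1)) ⬝ᵥ
              C.mulVec (hiter C a X0 (K + 1)))) := by
        rw [hterm (K + 1)]
        exact hstep
      calc hiter C a X0 (K + 2) i ≤ _ := h1
        _ ≤ (X0 i * Real.exp (∑ k ∈ Finset.range (K + 1),
              a k * (((Pi.single i 1 : Fin n → ℝ) - hiter C a X0 k) ⬝ᵥ
                C.mulVec (hiter C a X0 k)))) *
            Real.exp (a (K + 1) * (((Pi.single i 1 : Fin n → ℝ) - hiter C a X0 (K + 1)) ⬝ᵥ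
              C.mulVec (hiter C a X0 (K + 1)))) :=
            mul_le_mul_of_nonneg_right ih (Real.exp_pos _).le
        _ = _ := by rw [Finset.sum_range_succ _ (K + 1), Real.exp_add]; ring

end AuxStmt14

/-- if liminf (1/A_K) ∑ α_k (E_i − X^k)·CX^k < 0 then
liminf X^K(i) = 0. -/
theorem stmt14 {n : ℕ} (hn : 0 < n) (C : Matrix (Fin n) (Fin n) ℝ)
    (hC : ∀ i j, 0 ≤ C i j)
    (a : ℕ → ℝ) (hapos : ∀ k, 0 < a k)
    (ha0 : Tendsto a atTop (𝓝 0))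
    (hadiv : Tendsto (pSum a) atTop atTop)
    (hasum : Summable fun k => a k * (Real.exp (a k) - 1))
    (X0 : Fin n → ℝ) (hX0 : isInteriorPt X0)
    (i : Fin n)
    (h : Filter.liminf (fun K => (pSum a K)⁻¹ *
        ∑ k ∈ Finset.range (K + 1),
          a k * (((Pi.single i 1 : Fin n → ℝ) - hiter C a X0 k) ⬝ᵥ
            C.mulVec (hiter C a X0 k))) atTop < 0) :
    Filter.liminf (fun K => hiter C a X0 K i) atTop = 0 := by
  have hint : ∀ K, isInteriorPt (hiter C a X0 K) := interior_hiter C a hX0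
  have hApos : ∀ K, 0 < pSum a K := fun K =>
    Finset.sum_pos (fun k _ => hapos k) Finset.nonempty_range_add_one
  set M : ℝ := ∑ p, ∑ q, C p q with hM
  have hXle1 : ∀ K j, hiter C a X0 K j ≤ 1 := by
    intro K j
    calc hiter C a X0 K j ≤ ∑ m, hiter C a X0 K m :=
          Finset.single_le_sum (fun m _ => ((hint K).1 m).le) (Finset.mem_univ j)
      _ = 1 := (hint K).2
  have hCX_nonneg : ∀ K j, 0 ≤ C.mulVec (hiter C a X0 K) j := fun K j => by
    simpa [Matrix.mulVec, dotProduct] using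
      Finset.sum_nonneg fun m (_ : m ∈ Finset.univ) =>
        mul_nonneg (hC j m) ((hint K).1 m).le
  have hCX_le : ∀ K j, C.mulVec (hiter C a X0 K) j ≤ M := by
    intro K j
    calc C.mulVec (hiter C a X0 K) j = ∑ m, C j m * hiter C a X0 K m := rfl
      _ ≤ ∑ m, C j m := Finset.sum_le_sum fun m _ => by
            have h1 := hXle1 K m
            have h2 := ((hint K).1 m).le
            nlinarith [hC j m]
      _ ≤ M := Finset.single_le_sum (f := fun p => ∑ q, C p q)
            (fun p _ => Finset.sum_nonneg fun q _ => hC p q) (Finset.mem_univ j)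
  have hdot_nonneg : ∀ K, 0 ≤ hiter C a X0 K ⬝ᵥ C.mulVec (hiter C a X0 K) := fun K =>
    Finset.sum_nonneg fun j _ => mul_nonneg ((hint K).1 j).le (hCX_nonneg K j)
  have hterm_le : ∀ k,
      ((Pi.single i 1 : Fin n → ℝ) - hiter C a X0 k) ⬝ᵥ C.mulVec (hiter C a X0 k) ≤ M := by
    intro k
    rw [sub_dotProduct, single_dotProduct, one_mul]
    have h1 := hCX_le k i
    have h2 := hdot_nonneg k
    linarith
  have hfub : ∀ K, (pSum a K)⁻¹ * ∑ k ∈ Finset.range (K + 1),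
      a k * (((Pi.single i 1 : Fin n → ℝ) - hiter C a X0 k) ⬝ᵥ
        C.mulVec (hiter C a X0 k)) ≤ M := by
    intro K
    have hS : (∑ k ∈ Finset.range (K + 1),
        a k * (((Pi.single i 1 : Fin n → ℝ) - hiter C a X0 k) ⬝ᵥ
          C.mulVec (hiter C a X0 k))) ≤ M * pSum a K := by
      rw [pSum, Finset.mul_sum]
      refine Finset.sum_le_sum fun k _ => ?_
      have h1 := hterm_le k
      have h2 := (hapos k).le
      nlinarith
    calc (pSum a K)⁻¹ * _ ≤ (pSum a K)⁻¹ * (M * pSum a K) :=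
          mul_le_mul_of_nonneg_left hS (inv_nonneg.2 (hApos K).le)
      _ = M := by
          rw [mul_comm M (pSum a K), ← mul_assoc, inv_mul_cancel₀ (hApos K).ne', one_mul]
  have hcob : IsCoboundedUnder (· ≥ ·) atTop (fun K => (pSum a K)⁻¹ *
      ∑ k ∈ Finset.range (K + 1),
        a k * (((Pi.single i 1 : Fin n → ℝ) - hiter C a X0 k) ⬝ᵥ
          C.mulVec (hiter C a X0 k))) :=
    isCoboundedUnder_ge_of_le atTop hfub
  obtain ⟨b, hb1, hb2⟩ := exists_between h
  have hfreq := frequently_lt_of_liminf_lt hcob hb1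
  have hbA : Tendsto (fun K => b * pSum a K) atTop atBot :=
    (tendsto_const_mul_atBot_of_neg hb2).2 hadiv
  have hexp : Tendsto (fun K => Real.exp (b * pSum a K)) atTop (𝓝 0) :=
    Real.tendsto_exp_atBot.comp hbA
  have hmul : Tendsto (fun K => X0 i * Real.exp (b * pSum a K)) atTop (𝓝 (X0 i * 0)) :=
    hexp.const_mul _
  refine le_antisymm ?_ ?_
  · refine le_of_forall_pos_le_add fun ε hε => ?_
    rw [zero_add]
    have hev : ∀ᶠ K in atTop, X0 i * Real.exp (b * pSum a K) < ε :=
      hmul.eventually_lt_const (by simpa using hε)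
    refine liminf_le_of_frequently_le ?_ (isBoundedUnder_of ⟨0, fun K => ((hint K).1 i).le⟩)
    rw [Filter.frequently_atTop]
    intro N
    obtain ⟨K, hKN, hKb, hKe⟩ := Filter.frequently_atTop.1 (hfreq.and_eventually hev) N
    refine ⟨K + 1, le_trans hKN (Nat.le_succ K), ?_⟩
    have hSle : (∑ k ∈ Finset.range (K + 1),
        a k * (((Pi.single i 1 : Fin n → ℝ) - hiter C a X0 k) ⬝ᵥ
          C.mulVec (hiter C a X0 k))) ≤ b * pSum a K := by
      have heq : (∑ k ∈ Finset.range (K + 1),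
          a k * (((Pi.single i 1 : Fin n → ℝ) - hiter C a X0 k) ⬝ᵥ
            C.mulVec (hiter C a X0 k)))
          = pSum a K * ((pSum a K)⁻¹ * ∑ k ∈ Finset.range (K + 1),
            a k * (((Pi.single i 1 : Fin n → ℝ) - hiter C a X0 k) ⬝ᵥ
              C.mulVec (hiter C a X0 k))) := by
        rw [← mul_assoc, mul_inv_cancel₀ (hApos K).ne', one_mul]
      rw [heq]
      calc pSum a K * _ ≤ pSum a K * b := le_of_lt (mul_lt_mul_of_pos_left hKb (hApos K))
        _ = b * pSum a K := mul_comm _ _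
    calc hiter C a X0 (K + 1) i ≤ X0 i * Real.exp (∑ k ∈ Finset.range (K + 1),
          a k * (((Pi.single i 1 : Fin n → ℝ) - hiter C a X0 k) ⬝ᵥ
            C.mulVec (hiter C a X0 k))) := hiter_le C a hX0 i K
      _ ≤ X0 i * Real.exp (b * pSum a K) :=
          mul_le_mul_of_nonneg_left (Real.exp_le_exp.2 hSle) (hX0.1 i).le
      _ ≤ ε := le_of_lt hKe
  · exact le_liminf_of_le (isCoboundedUnder_ge_of_le atTop fun K => hXle1 K i)
      (Eventually.of_forall fun K => ((hint K).1 i).le)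
end
end
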